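/- For every integer n ≥ 1 and every continuous function f : [0,1] → ℝ, the polynomials L_n^ρ f converge uniformly on [0,1], as ρ → ∞, to L_n f, the Lagrange interpolation polynomial of f at the n+1 equidistant nodes 0, 1/n, …, (n−1)/n, 1. -/

import Mathlib

/-!
For `0 < k < n`, `F_{n,k}^ρ g` is the mean of `g` under the Beta distribution `B(kρ, (n-k)ρ)`,
whose mean is `k/n` and whose variance `(k/n)(1 - k/n)/(nρ + 1)` tends to `0`. Together with the
bound `|g t - g (k/n)| ≤ ε + c (t - k/n)²` for continuous `g`, this gives `F_{n,k}^ρ g → g (k/n)`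
for every `k ≤ n`. Hence the matrix `(F_{n,k}^ρ(x^j))_{k,j}` of the linear system for the
coefficients of `L_n^ρ f` tends to the invertible Vandermonde matrix of the nodes `k/n`, while the
right-hand side `(F_{n,k}^ρ f)_k` tends to `(f (k/n))_k`. So the coefficients of `L_n^ρ f` tend to
those of `L_n f`, which for polynomials of bounded degree means uniform convergence on compact sets.
-/

open MeasureTheory

/-- Euler Beta function `B(a,b) = ∫₀¹ t^(a-1) (1-t)^(b-1) dt`. -/
noncomputable def betaFn (a b : ℝ) : ℝ :=
  ∫ t in (0:ℝ)..1, t ^ (a - 1) * (1 - t) ^ (b - 1)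

/-- The functionals `F_{n,k}^ρ`. -/
noncomputable def Ffun (n k : ℕ) (ρ : ℝ) (f : ℝ → ℝ) : ℝ :=
  if k = 0 then f 0
  else if k = n then f 1
  else (betaFn ((k : ℝ) * ρ) (((n : ℝ) - (k : ℝ)) * ρ))⁻¹ *
    ∫ t in (0:ℝ)..1, t ^ ((k : ℝ) * ρ - 1) * (1 - t) ^ (((n : ℝ) - (k : ℝ)) * ρ - 1) * f t

/-- Bernstein basis polynomial `p_{n,k}(x)`. -/
noncomputable def bern (n k : ℕ) (x : ℝ) : ℝ :=
  (n.choose k : ℝ) * x ^ k * (1 - x) ^ (n - k)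

/-- The operator `U_n^ρ`. -/
noncomputable def Uop (n : ℕ) (ρ : ℝ) (f : ℝ → ℝ) (x : ℝ) : ℝ :=
  ∑ k ∈ Finset.range (n + 1), Ffun n k ρ f * bern n k x

open Filter Topology Set

section BetaAverage

variable {a b : ℝ}

lemma ofReal_betaDensity {t : ℝ} (ht : t ∈ Icc (0 : ℝ) 1) :
    ((t ^ (a - 1) * (1 - t) ^ (b - 1) : ℝ) : ℂ) =
      (t : ℂ) ^ ((a : ℂ) - 1) * (1 - t) ^ ((b : ℂ) - 1) := by
  rw [Complex.ofReal_mul, Complex.ofReal_cpow ht.1, Complex.ofReal_cpow (sub_nonneg.2 ht.2)]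
  push_cast
  rfl

lemma intervalIntegrable_betaDensity (ha : 0 < a) (hb : 0 < b) :
    IntervalIntegrable (fun t : ℝ => t ^ (a - 1) * (1 - t) ^ (b - 1)) volume 0 1 := by
  have h := Complex.betaIntegral_convergent (u := a) (v := b) (by simpa) (by simpa)
  refine (show IntervalIntegrable _ volume 0 1 from ⟨h.1.re, h.2.re⟩).congr ?_
  rw [uIoc_of_le zero_le_one]
  exact fun t ht => by
    beta_reduce
    rw [← ofReal_betaDensity (Ioc_subset_Icc_self ht)]
    exact Complex.ofReal_re _

lemma ofReal_betaFn (a b : ℝ) : (betaFn a b : ℂ) = Complex.betaIntegral a b := by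
  rw [betaFn, Complex.betaIntegral, ← intervalIntegral.integral_ofReal]
  refine intervalIntegral.integral_congr fun t ht => ?_
  rw [uIcc_of_le zero_le_one] at ht
  exact ofReal_betaDensity ht

lemma betaFn_eq_beta (ha : 0 < a) (hb : 0 < b) : betaFn a b = ProbabilityTheory.beta a b := by
  rw [ProbabilityTheory.beta_eq_betaIntegralReal a b ha hb, ← ofReal_betaFn, Complex.ofReal_re]

lemma betaDensity_nonneg {t : ℝ} (ht : t ∈ Icc (0 : ℝ) 1) :
    0 ≤ t ^ (a - 1) * (1 - t) ^ (b - 1) :=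
  mul_nonneg (Real.rpow_nonneg ht.1 _) (Real.rpow_nonneg (sub_nonneg.2 ht.2) _)

lemma betaFn_pos (ha : 0 < a) (hb : 0 < b) : 0 < betaFn a b :=
  betaFn_eq_beta ha hb ▸ ProbabilityTheory.beta_pos ha hb

lemma betaFn_add_one (ha : 0 < a) (hb : 0 < b) :
    betaFn (a + 1) b = a / (a + b) * betaFn a b := by
  have hab : a + b ≠ 0 := by positivity
  rw [betaFn_eq_beta (by positivity) hb, betaFn_eq_beta ha hb, ProbabilityTheory.beta,
    ProbabilityTheory.beta, Real.Gamma_add_one ha.ne', add_right_comm,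
    Real.Gamma_add_one hab]
  field_simp

lemma integral_betaDensity_mul_pow (j : ℕ) :
    ∫ t in (0 : ℝ)..1, t ^ (a - 1) * (1 - t) ^ (b - 1) * t ^ j = betaFn (a + j) b := by
  refine intervalIntegral.integral_congr_ae (Eventually.of_forall fun t ht => ?_)
  rw [uIoc_of_le zero_le_one] at ht
  rw [mul_right_comm, ← Real.rpow_natCast t j, ← Real.rpow_add ht.1]
  ring_nf

lemma betaFn_add_nat (ha : 0 < a) (hb : 0 < b) (j : ℕ) :
    betaFn (a + j) b = (∏ i ∈ Finset.range j, (a + i) / (a + b + i)) * betaFn a b := by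
  induction j with
  | zero => simp
  | succ j ih =>
    rw [Finset.prod_range_succ, Nat.cast_succ, ← add_assoc,
      betaFn_add_one (by positivity) hb, ih, add_right_comm a b]
    ring

noncomputable def betaAverage (a b : ℝ) (g : ℝ → ℝ) : ℝ :=
  (betaFn a b)⁻¹ * ∫ t in (0 : ℝ)..1, t ^ (a - 1) * (1 - t) ^ (b - 1) * g t

variable {g h : ℝ → ℝ}

lemma intervalIntegrable_betaDensity_mul (ha : 0 < a) (hb : 0 < b)
    (hg : ContinuousOn g (Icc 0 1)) :
    IntervalIntegrable (fun t => t ^ (a - 1) * (1 - t) ^ (b - 1) * g t) volume 0 1 :=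
  (intervalIntegrable_betaDensity ha hb).mul_continuousOn (by rwa [uIcc_of_le zero_le_one])

lemma betaAverage_pow (ha : 0 < a) (hb : 0 < b) (j : ℕ) :
    betaAverage a b (· ^ j) = ∏ i ∈ Finset.range j, (a + i) / (a + b + i) := by
  rw [betaAverage, integral_betaDensity_mul_pow, betaFn_add_nat ha hb]
  field_simp [(betaFn_pos ha hb).ne']

lemma betaAverage_const_mul (c : ℝ) (g : ℝ → ℝ) :
    betaAverage a b (fun t => c * g t) = c * betaAverage a b g := by
  simp only [betaAverage, mul_left_comm _ c, intervalIntegral.integral_const_mul]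

lemma betaAverage_const (ha : 0 < a) (hb : 0 < b) (c : ℝ) :
    betaAverage a b (fun _ => c) = c := by
  have h1 : betaAverage a b (fun _ => 1) = 1 := by simpa using betaAverage_pow ha hb 0
  simpa [h1] using betaAverage_const_mul (a := a) (b := b) c fun _ => 1

lemma betaAverage_add (ha : 0 < a) (hb : 0 < b) (hg : ContinuousOn g (Icc 0 1))
    (hh : ContinuousOn h (Icc 0 1)) :
    betaAverage a b (fun t => g t + h t) = betaAverage a b g + betaAverage a b h := by
  rw [betaAverage, betaAverage, betaAverage, ← mul_add,
    ← intervalIntegral.integral_add (intervalIntegrable_betaDensity_mul ha hb hg)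
      (intervalIntegrable_betaDensity_mul ha hb hh)]
  simp only [mul_add]

lemma betaAverage_finset_sum {ι : Type*} (ha : 0 < a) (hb : 0 < b) (s : Finset ι)
    (c : ι → ℝ) {g : ι → ℝ → ℝ} (hg : ∀ i ∈ s, ContinuousOn (g i) (Icc 0 1)) :
    betaAverage a b (fun t => ∑ i ∈ s, c i * g i t) =
      ∑ i ∈ s, c i * betaAverage a b (g i) := by
  simp only [betaAverage, Finset.mul_sum, mul_left_comm _ (c _)]
  rw [intervalIntegral.integral_finsetSum fun i hi =>
    ((intervalIntegrable_betaDensity_mul ha hb (hg i hi)).const_mul (c i))]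
  simp only [intervalIntegral.integral_const_mul, Finset.mul_sum]
  exact Finset.sum_congr rfl fun i _ => mul_left_comm (betaFn a b)⁻¹ (c i) _

lemma betaAverage_sq_sub_mean (ha : 0 < a) (hb : 0 < b) :
    betaAverage a b (fun t => (t - a / (a + b)) ^ 2) =
      a / (a + b) * (1 - a / (a + b)) / (a + b + 1) := by
  set μ := a / (a + b)
  calc betaAverage a b (fun t => (t - μ) ^ 2)
      = betaAverage a b (fun t => t ^ 2 + ((-2 * μ) * t ^ 1 + μ ^ 2)) := by
        congr 1; ext t; ring
    _ = betaAverage a b (· ^ 2) + ((-2 * μ) * betaAverage a b (· ^ 1) + μ ^ 2) := by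
        rw [betaAverage_add ha hb (by fun_prop) (by fun_prop),
          betaAverage_add ha hb (by fun_prop) (by fun_prop), betaAverage_const_mul,
          betaAverage_const ha hb]
    _ = μ * (1 - μ) / (a + b + 1) := by
        simp only [μ, betaAverage_pow ha hb, Finset.prod_range_succ, Finset.prod_range_zero]
        field_simp
        ring

lemma abs_betaAverage_le (ha : 0 < a) (hb : 0 < b) (hg : ContinuousOn g (Icc 0 1))
    (hh : ContinuousOn h (Icc 0 1)) (hgh : ∀ t ∈ Icc (0 : ℝ) 1, |g t| ≤ h t) :
    |betaAverage a b g| ≤ betaAverage a b h := by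
  rw [betaAverage, betaAverage, abs_mul, abs_of_pos (inv_pos.2 (betaFn_pos ha hb))]
  refine mul_le_mul_of_nonneg_left ?_ (inv_nonneg.2 (betaFn_pos ha hb).le)
  refine (intervalIntegral.abs_integral_le_integral_abs zero_le_one).trans
    (intervalIntegral.integral_mono_on zero_le_one
      (intervalIntegrable_betaDensity_mul ha hb hg).abs
      (intervalIntegrable_betaDensity_mul ha hb hh) fun t ht => ?_)
  rw [abs_mul, abs_of_nonneg (betaDensity_nonneg ht)]
  exact mul_le_mul_of_nonneg_left (hgh t ht) (betaDensity_nonneg ht)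

lemma abs_betaAverage_sub_le (ha : 0 < a) (hb : 0 < b) (hg : ContinuousOn g (Icc 0 1))
    (hh : ContinuousOn h (Icc 0 1)) {y : ℝ} (hgh : ∀ t ∈ Icc (0 : ℝ) 1, |g t - y| ≤ h t) :
    |betaAverage a b g - y| ≤ betaAverage a b h := by
  have hsub : betaAverage a b (fun t => g t + -y) = betaAverage a b g - y := by
    rw [betaAverage_add ha hb hg continuousOn_const, betaAverage_const ha hb, sub_eq_add_neg]
  rw [← hsub]
  exact abs_betaAverage_le ha hb (by fun_prop) hh hgh

end BetaAverage

lemma ContinuousOn.exists_abs_sub_le_add_mul_sq {α : Type*} [PseudoMetricSpace α] {K : Set α}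
    {g : α → ℝ} (hK : IsCompact K) (hg : ContinuousOn g K) {x₀ : α} (hx₀ : x₀ ∈ K) {ε : ℝ}
    (hε : 0 < ε) : ∃ c, ∀ t ∈ K, |g t - g x₀| ≤ ε + c * dist t x₀ ^ 2 := by
  obtain ⟨C, hC⟩ := hK.exists_bound_of_continuousOn hg
  simp only [Real.norm_eq_abs] at hC
  have hC0 : 0 ≤ C := (abs_nonneg _).trans (hC x₀ hx₀)
  obtain ⟨δ, hδ, hgδ⟩ := Metric.continuousWithinAt_iff.1 (hg x₀ hx₀) ε hε
  refine ⟨2 * C / δ ^ 2, fun t ht => ?_⟩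
  rcases lt_or_ge (dist t x₀) δ with hnear | hfar
  · have hgt := hgδ ht hnear
    rw [Real.dist_eq] at hgt
    have : 0 ≤ 2 * C / δ ^ 2 * dist t x₀ ^ 2 := by positivity
    linarith
  · calc |g t - g x₀| ≤ |g t| + |g x₀| := abs_sub _ _
      _ ≤ 2 * C := by linarith [hC t ht, hC x₀ hx₀]
      _ ≤ 2 * C / δ ^ 2 * dist t x₀ ^ 2 := by
        rw [div_mul_eq_mul_div, le_div_iff₀ (by positivity)]
        gcongr
      _ ≤ ε + 2 * C / δ ^ 2 * dist t x₀ ^ 2 := by linarith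

lemma tendsto_betaAverage_mul_atTop {p q : ℝ} (hp : 0 < p) (hq : 0 < q) {g : ℝ → ℝ}
    (hg : ContinuousOn g (Icc 0 1)) :
    Tendsto (fun ρ => betaAverage (p * ρ) (q * ρ) g) atTop (𝓝 (g (p / (p + q)))) := by
  set μ := p / (p + q)
  have hμ : μ ∈ Icc (0 : ℝ) 1 := ⟨by positivity, div_le_one_of_le₀ (by linarith) (by positivity)⟩
  have hvar : Tendsto (fun ρ => μ * (1 - μ) / ((p + q) * ρ + 1)) atTop (𝓝 0) :=
    tendsto_const_nhds.div_atTop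
      (tendsto_atTop_add_const_right _ _ (tendsto_id.const_mul_atTop (by positivity)))
  rw [Metric.tendsto_nhds]
  intro ε hε
  obtain ⟨c, hc⟩ := hg.exists_abs_sub_le_add_mul_sq isCompact_Icc hμ (half_pos hε)
  have hcvar := (hvar.const_mul c).eventually_lt_const (show c * 0 < ε / 2 by linarith)
  filter_upwards [hcvar, eventually_gt_atTop 0] with ρ hρε hρ
  have ha : 0 < p * ρ := by positivity
  have hb : 0 < q * ρ := by positivity
  have hmean : p * ρ / (p * ρ + q * ρ) = μ := by rw [← add_mul, mul_div_mul_right _ _ hρ.ne']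
  have hsum : p * ρ + q * ρ = (p + q) * ρ := by ring
  rw [Real.dist_eq]
  calc |betaAverage (p * ρ) (q * ρ) g - g μ|
      ≤ betaAverage (p * ρ) (q * ρ) (fun t => ε / 2 + c * (t - μ) ^ 2) :=
        abs_betaAverage_sub_le ha hb hg (by fun_prop) fun t ht => by
          simpa [Real.dist_eq, sq_abs] using hc t ht
    _ = ε / 2 + c * (μ * (1 - μ) / ((p + q) * ρ + 1)) := by
        rw [betaAverage_add ha hb continuousOn_const (by fun_prop), betaAverage_const ha hb,
          betaAverage_const_mul, ← hmean, betaAverage_sq_sub_mean ha hb, hsum]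
    _ < ε := by linarith

section Ffun

variable {n k : ℕ}

lemma Ffun_eq_betaAverage (hk0 : k ≠ 0) (hkn : k ≠ n) (ρ : ℝ) (g : ℝ → ℝ) :
    Ffun n k ρ g = betaAverage (k * ρ) ((n - k) * ρ) g := by
  rw [Ffun, if_neg hk0, if_neg hkn, betaAverage]

lemma tendsto_Ffun (hk : k ≤ n) {g : ℝ → ℝ} (hg : ContinuousOn g (Icc 0 1)) :
    Tendsto (fun ρ => Ffun n k ρ g) atTop (𝓝 (g (k / n))) := by
  rcases eq_or_ne k 0 with rfl | hk0
  · simp [Ffun]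
  rcases eq_or_ne k n with rfl | hkn
  · simp [Ffun, hk0]
  have hkpos : (0 : ℝ) < k := by positivity
  have hnk : (0 : ℝ) < n - k := sub_pos.2 (by exact_mod_cast hk.lt_of_ne hkn)
  simp_rw [Ffun_eq_betaAverage hk0 hkn]
  simpa using tendsto_betaAverage_mul_atTop hkpos hnk hg

lemma Ffun_finset_sum (hk : k ≤ n) {ρ : ℝ} (hρ : 0 < ρ) {ι : Type*} (s : Finset ι) (c : ι → ℝ)
    {g : ι → ℝ → ℝ} (hg : ∀ i ∈ s, ContinuousOn (g i) (Icc 0 1)) :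
    Ffun n k ρ (fun x => ∑ i ∈ s, c i * g i x) = ∑ i ∈ s, c i * Ffun n k ρ (g i) := by
  rcases eq_or_ne k 0 with rfl | hk0
  · simp [Ffun]
  rcases eq_or_ne k n with rfl | hkn
  · simp [Ffun, hk0]
  have hnk : (0 : ℝ) < n - k := sub_pos.2 (by exact_mod_cast hk.lt_of_ne hkn)
  simp_rw [Ffun_eq_betaAverage hk0 hkn]
  exact betaAverage_finset_sum (by positivity) (by positivity) s c hg

lemma Ffun_eval (hk : k ≤ n) {ρ : ℝ} (hρ : 0 < ρ) {p : Polynomial ℝ} {m : ℕ}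
    (hp : p.natDegree < m) :
    Ffun n k ρ (fun x => p.eval x) = ∑ j ∈ Finset.range m, p.coeff j * Ffun n k ρ (· ^ j) := by
  simp_rw [Polynomial.eval_eq_sum_range' hp]
  exact Ffun_finset_sum hk hρ _ _ fun j _ => by fun_prop

end Ffun

open scoped Matrix

lemma Matrix.vandermonde_mulVec_coeff {R : Type*} [CommRing R] {m : ℕ} (v : Fin m → R)
    {p : Polynomial R} (hp : p.natDegree < m) :
    Matrix.vandermonde v *ᵥ (fun j => p.coeff j) = fun i => p.eval (v i) := by
  ext i
  rw [Matrix.mulVec, dotProduct, Polynomial.eval_eq_sum_range' hp, ← Fin.sum_univ_eq_sum_range]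
  simp only [Matrix.vandermonde_apply, mul_comm]

lemma Matrix.tendsto_of_tendsto_mulVec {α ι 𝕜 : Type*} [Fintype ι] [DecidableEq ι] [Field 𝕜]
    [TopologicalSpace 𝕜] [IsTopologicalDivisionRing 𝕜] [T1Space 𝕜] {l : Filter α}
    {M : α → Matrix ι ι 𝕜} {A : Matrix ι ι 𝕜} {x : α → ι → 𝕜} {x₀ : ι → 𝕜}
    (hM : Tendsto M l (𝓝 A)) (hA : A.det ≠ 0)
    (hMx : Tendsto (fun i => M i *ᵥ x i) l (𝓝 (A *ᵥ x₀))) : Tendsto x l (𝓝 x₀) := by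
  have hinv : Tendsto (fun i => (M i)⁻¹) l (𝓝 A⁻¹) :=
    (continuousAt_matrix_inv A (by simpa [Ring.inverse_eq_inv'] using continuousAt_inv₀ hA)).tendsto
      |>.comp hM
  have hdet : ∀ᶠ i in l, (M i).det ≠ 0 :=
    ((continuous_id.matrix_det.tendsto A).comp hM).eventually_ne hA
  have hlim : Tendsto (fun i => (M i)⁻¹ *ᵥ (M i *ᵥ x i)) l (𝓝 (A⁻¹ *ᵥ (A *ᵥ x₀))) :=
    ((continuous_fst.matrix_mulVec continuous_snd).tendsto _).comp (hinv.prodMk_nhds hMx)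
  rw [Matrix.mulVec_mulVec, Matrix.nonsing_inv_mul _ (isUnit_iff_ne_zero.2 hA),
    Matrix.one_mulVec] at hlim
  refine hlim.congr' (hdet.mono fun i hi => ?_)
  rw [Matrix.mulVec_mulVec, Matrix.nonsing_inv_mul _ (isUnit_iff_ne_zero.2 hi), Matrix.one_mulVec]

lemma Polynomial.tendstoUniformlyOn_eval_of_tendsto_coeff {α : Type*} {l : Filter α}
    {p : α → Polynomial ℝ} {q : Polynomial ℝ} {m : ℕ} (hp : ∀ᶠ i in l, (p i).natDegree < m)
    (hq : q.natDegree < m) (hcoeff : ∀ j < m, Tendsto (fun i => (p i).coeff j) l (𝓝 (q.coeff j)))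
    {K : Set ℝ} (hK : IsCompact K) :
    TendstoUniformlyOn (fun i x => (p i).eval x) (fun x => q.eval x) l K := by
  have hsum : ∀ r : Polynomial ℝ, r.natDegree < m →
      r.toContinuousMap = ∑ j ∈ Finset.range m, r.coeff j • (Polynomial.X ^ j).toContinuousMap :=
    fun r hr => by ext x; simp [Polynomial.eval_eq_sum_range' hr]
  have hlim : Tendsto (fun i => (p i).toContinuousMap) l (𝓝 q.toContinuousMap) := by
    rw [hsum q hq]
    refine Tendsto.congr' (hp.mono fun i hi => (hsum (p i) hi).symm) ?_
    exact tendsto_finsetSum _ fun j hj => (hcoeff j (Finset.mem_range.1 hj)).smul_const _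
  exact ContinuousMap.tendsto_iff_forall_isCompact_tendstoUniformlyOn.1 hlim K hK

noncomputable def momentMatrix (n : ℕ) (ρ : ℝ) : Matrix (Fin (n + 1)) (Fin (n + 1)) ℝ :=
  Matrix.of fun k j => Ffun n k ρ (· ^ (j : ℕ))

lemma tendsto_momentMatrix (n : ℕ) :
    Tendsto (momentMatrix n) atTop (𝓝 (Matrix.vandermonde fun k : Fin (n + 1) => (k : ℝ) / n)) :=
  tendsto_pi_nhds.2 fun k => tendsto_pi_nhds.2 fun j =>
    tendsto_Ffun (g := (· ^ (j : ℕ))) k.is_le (by fun_prop)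

lemma momentMatrix_mulVec_coeff {n : ℕ} {ρ : ℝ} (hρ : 0 < ρ) {p : Polynomial ℝ}
    (hp : p.natDegree ≤ n) :
    momentMatrix n ρ *ᵥ (fun j => p.coeff j) =
      fun k : Fin (n + 1) => Ffun n k ρ (fun x => p.eval x) := by
  ext k
  rw [Ffun_eval k.is_le hρ (Nat.lt_succ_of_le hp), ← Fin.sum_univ_eq_sum_range, Matrix.mulVec,
    dotProduct]
  simp only [momentMatrix, Matrix.of_apply, mul_comm]

lemma injective_natCast_div (n : ℕ) : Function.Injective fun k : Fin (n + 1) => (k : ℝ) / n := by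
  intro i j hij
  rcases eq_or_ne n 0 with rfl | hn
  · exact Subsingleton.elim (α := Fin 1) i j
  · exact Fin.ext (by exact_mod_cast (div_left_inj' (Nat.cast_ne_zero.2 hn)).1 hij)

theorem tendstoUniformlyOn_Lagrange_general (n : ℕ)
    (f : ℝ → ℝ) (hf : ContinuousOn f (Set.Icc 0 1))
    (L : ℝ → Polynomial ℝ)
    (hLdeg : ∀ ρ : ℝ, 0 < ρ → (L ρ).natDegree ≤ n)
    (hL : ∀ ρ : ℝ, 0 < ρ → ∀ k ≤ n,
      Ffun n k ρ (fun x => (L ρ).eval x) = Ffun n k ρ f)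
    (Lg : Polynomial ℝ) (hLgdeg : Lg.natDegree ≤ n)
    (hLg : ∀ k ≤ n, Lg.eval ((k : ℝ) / (n : ℝ)) = f ((k : ℝ) / (n : ℝ))) :
    TendstoUniformlyOn (fun (ρ : ℝ) (x : ℝ) => (L ρ).eval x)
      (fun x => Lg.eval x) Filter.atTop (Set.Icc 0 1) := by
  have hrhs : Tendsto (fun ρ => momentMatrix n ρ *ᵥ fun j => (L ρ).coeff j) atTop
      (𝓝 (Matrix.vandermonde (fun k : Fin (n + 1) => (k : ℝ) / n) *ᵥ fun j => Lg.coeff j)) := by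
    rw [Matrix.vandermonde_mulVec_coeff _ (Nat.lt_succ_of_le hLgdeg)]
    refine Tendsto.congr' (eventually_gt_atTop 0 |>.mono fun ρ hρ => ?_)
      (tendsto_pi_nhds.2 fun k => hLg k k.is_le ▸ tendsto_Ffun k.is_le hf)
    beta_reduce
    rw [momentMatrix_mulVec_coeff hρ (hLdeg ρ hρ)]
    exact funext fun k => (hL ρ hρ k k.is_le).symm
  have hcoeff := Matrix.tendsto_of_tendsto_mulVec (tendsto_momentMatrix n)
    (Matrix.det_vandermonde_ne_zero_iff.2 (injective_natCast_div n)) hrhs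
  exact Polynomial.tendstoUniformlyOn_eval_of_tendsto_coeff
    (eventually_gt_atTop 0 |>.mono fun ρ hρ => Nat.lt_succ_of_le (hLdeg ρ hρ))
    (Nat.lt_succ_of_le hLgdeg) (fun j hj => tendsto_pi_nhds.1 hcoeff ⟨j, hj⟩) isCompact_Icc

/-- For every `n ≥ 1` and continuous `f : [0,1] → ℝ`, the interpolation polynomials
`L_n^ρ f` converge uniformly on `[0,1]`, as `ρ → ∞`, to the Lagrange interpolation
polynomial `L_n f` of `f` at the nodes `0, 1/n, …, (n-1)/n, 1`. -/
theorem tendstoUniformlyOn_Lagrange (n : ℕ) (hn : 1 ≤ n)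
    (f : ℝ → ℝ) (hf : ContinuousOn f (Set.Icc 0 1))
    (L : ℝ → Polynomial ℝ)
    (hLdeg : ∀ ρ : ℝ, 0 < ρ → (L ρ).natDegree ≤ n)
    (hL : ∀ ρ : ℝ, 0 < ρ → ∀ k ≤ n,
      Ffun n k ρ (fun x => (L ρ).eval x) = Ffun n k ρ f)
    (Lg : Polynomial ℝ) (hLgdeg : Lg.natDegree ≤ n)
    (hLg : ∀ k ≤ n, Lg.eval ((k : ℝ) / (n : ℝ)) = f ((k : ℝ) / (n : ℝ))) :
    TendstoUniformlyOn (fun (ρ : ℝ) (x : ℝ) => (L ρ).eval x)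
      (fun x => Lg.eval x) Filter.atTop (Set.Icc 0 1) :=
  tendstoUniformlyOn_Lagrange_general n f hf L hLdeg hL Lg hLgdeg hLg
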